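/- Let P, Q be complex polynomials of degree at most n with |P(z)|² + |Q(z)|² = 1 for all z on the unit circle. Then there exist unitaries A_0, A_1, …, A_n ∈ U(2) such that A_n W̃(z) A_{n−1} W̃(z) ⋯ W̃(z) A_0 applied to (1,0)ᵀ equals (P(z), Q(z))ᵀ for every z ∈ 𝕋, where W̃(z) = diag(z, 1). -/

import Mathlib

open Polynomial Matrix

local notation "conj'" => starRingEnd ℂ

lemma circle_infinite : {z : ℂ | ‖z‖ = 1}.Infinite := by
  apply Set.infinite_of_injective_forall_mem
    (f := fun n : ℕ => ((n : ℂ) * Complex.I - 1) / ((n : ℂ) * Complex.I + 1))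

  · intro a b hab
    have ha : (a : ℂ) * Complex.I + 1 ≠ 0 := by
      intro h
      have := congrArg Complex.re h
      simp at this
    have hb : (b : ℂ) * Complex.I + 1 ≠ 0 := by
      intro h
      have := congrArg Complex.re h
      simp at this
    rw [div_eq_div_iff ha hb] at hab
    have h2 : (2 : ℂ) * a * Complex.I = 2 * b * Complex.I := by ring_nf at hab ⊢; linear_combination hab
    have : (a : ℂ) = b := by
      field_simp [Complex.I_ne_zero] at h2
      exact_mod_cast h2
    exact_mod_cast this
  · intro n
    simp only [Set.mem_setOf_eq, norm_div]
    rw [div_eq_one_iff_eq]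
    · simp [Complex.norm_def, Complex.normSq_apply]
    · intro h
      rw [norm_eq_zero] at h
      have := congrArg Complex.re h
      simp at this

lemma eval_reflect'' (N : ℕ) (p : Polynomial ℂ) (z : ℂ) (hz : z ≠ 0) (hp : p.natDegree ≤ N) :
    (p.reflect N).eval z = z ^ N * p.eval z⁻¹ := by
  have : Invertible (z⁻¹) := invertibleOfNonzero (inv_ne_zero hz)
  have h := Polynomial.eval₂_reflect_mul_pow (RingHom.id ℂ) z⁻¹ N p hp
  rw [invOf_eq_inv, inv_inv] at h
  simp only [← Polynomial.eval_map, Polynomial.map_id] at h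
  rw [← h, mul_comm, mul_assoc, ← mul_pow, inv_mul_cancel₀ hz, one_pow, mul_one]

lemma orth_lemma (n : ℕ) (P Q : Polynomial ℂ)
    (hP : P.natDegree ≤ n + 1) (hQ : Q.natDegree ≤ n + 1)
    (hnorm : ∀ z : ℂ, ‖z‖ = 1 →
      ‖P.eval z‖ ^ 2 + ‖Q.eval z‖ ^ 2 = 1) :
    P.coeff 0 * conj' (P.coeff (n + 1)) + Q.coeff 0 * conj' (Q.coeff (n + 1)) = 0 := by
  set N := n + 1 with hN
  have hPm : (P.map conj').natDegree ≤ N := by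
    rwa [Polynomial.natDegree_map_eq_of_injective (RingHom.injective _)]
  have hQm : (Q.map conj').natDegree ≤ N := by
    rwa [Polynomial.natDegree_map_eq_of_injective (RingHom.injective _)]
  set F : Polynomial ℂ :=
    P * ((P.map conj').reflect N) + Q * ((Q.map conj').reflect N) - X ^ N with hF
  have hF0 : F = 0 := by
    apply Polynomial.eq_zero_of_infinite_isRoot
    apply circle_infinite.mono
    intro z hz
    simp only [Set.mem_setOf_eq] at hz
    have hz0 : z ≠ 0 := by
      intro h; rw [h] at hz; simp at hz
    have hinv : z⁻¹ = conj' z := by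
      apply inv_eq_of_mul_eq_one_right
      rw [Complex.mul_conj]
      norm_cast
      rw [Complex.normSq_eq_norm_sq, hz]; norm_num
    have e1 : (P.map conj').eval (conj' z) = conj' (P.eval z) := by
      rw [Polynomial.eval_map, Polynomial.eval₂_at_apply]
    have e2 : (Q.map conj').eval (conj' z) = conj' (Q.eval z) := by
      rw [Polynomial.eval_map, Polynomial.eval₂_at_apply]
    have h1 : P.eval z * conj' (P.eval z) = ((‖P.eval z‖ ^ 2 : ℝ) : ℂ) := by
      rw [Complex.mul_conj, Complex.sq_norm]
    have h2 : Q.eval z * conj' (Q.eval z) = ((‖Q.eval z‖ ^ 2 : ℝ) : ℂ) := by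
      rw [Complex.mul_conj, Complex.sq_norm]
    have habs := hnorm z hz
    simp only [Set.mem_setOf_eq, Polynomial.IsRoot, hF, eval_sub, eval_add, eval_mul, eval_pow,
      eval_X]
    rw [eval_reflect'' N _ z hz0 hPm, eval_reflect'' N _ z hz0 hQm, hinv, e1, e2]
    have : ((‖P.eval z‖ ^ 2 : ℝ) : ℂ) + ((‖Q.eval z‖ ^ 2 : ℝ) : ℂ) = 1 := by
      exact_mod_cast habs
    linear_combination z ^ N * h1 + z ^ N * h2 + z ^ N * this
  have h0 := congrArg (fun p => Polynomial.coeff p 0) hF0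
  simp only [hF, coeff_sub, coeff_add, Polynomial.mul_coeff_zero, Polynomial.coeff_reflect,
    Polynomial.coeff_zero, Polynomial.coeff_X_pow] at h0
  rw [Polynomial.revAt_le (Nat.zero_le N)] at h0
  simp only [Nat.sub_zero, Polynomial.coeff_map] at h0
  have hNne : ¬ (0 = N) := by omega
  rw [if_neg hNne] at h0
  rw [sub_zero] at h0
  exact h0

lemma normsq_combo (e1 e2 p q : ℂ) (h : e1 * conj' e1 + e2 * conj' e2 = 1) :
    ‖conj' e1 * p + conj' e2 * q‖ ^ 2 + ‖-e2 * p + e1 * q‖ ^ 2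
      = ‖p‖ ^ 2 + ‖q‖ ^ 2 := by
  have key : (conj' e1 * p + conj' e2 * q) * conj' (conj' e1 * p + conj' e2 * q)
      + (-e2 * p + e1 * q) * conj' (-e2 * p + e1 * q) = p * conj' p + q * conj' q := by
    simp only [map_add, _root_.map_mul, map_neg, Complex.conj_conj]
    linear_combination (p * conj' p + q * conj' q) * h
  rw [Complex.mul_conj, Complex.mul_conj, Complex.mul_conj, Complex.mul_conj] at key
  have key' : Complex.normSq (conj' e1 * p + conj' e2 * q) + Complex.normSq (-e2 * p + e1 * q)
      = Complex.normSq p + Complex.normSq q := by exact_mod_cast key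
  simp only [Complex.sq_norm]
  exact key'

lemma unitary_mat (e1 e2 : ℂ) (h : e1 * conj' e1 + e2 * conj' e2 = 1) :
    !![e1, -conj' e2; e2, conj' e1] ∈ Matrix.unitaryGroup (Fin 2) ℂ := by
  rw [Matrix.mem_unitaryGroup_iff]
  have hstar : star !![e1, -conj' e2; e2, conj' e1] = !![conj' e1, conj' e2; -e2, e1] := by
    rw [star_eq_conjTranspose]
    ext i j
    fin_cases i <;> fin_cases j <;> simp [Matrix.conjTranspose_apply]
  rw [hstar, Matrix.mul_fin_two, Matrix.one_fin_two]
  ext i j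
  fin_cases i <;> fin_cases j <;> simp <;>
    first
      | linear_combination h
      | linear_combination -h
      | ring1

lemma exists_e (u1 u2 v1 v2 : ℂ) (horth : u1 * conj' v1 + u2 * conj' v2 = 0) :
    ∃ e1 e2 : ℂ, e1 * conj' e1 + e2 * conj' e2 = 1 ∧
      conj' e1 * u1 + conj' e2 * u2 = 0 ∧ e1 * v2 - e2 * v1 = 0 := by
  by_cases hv : v1 = 0 ∧ v2 = 0
  · by_cases hu : u1 = 0 ∧ u2 = 0
    · exact ⟨1, 0, by simp, by simp [hu.1, hu.2], by simp [hv.1, hv.2]⟩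
    · have hpos : 0 < Complex.normSq u1 + Complex.normSq u2 := by
        rcases (not_and_or.mp hu) with h | h
        · nlinarith [Complex.normSq_pos.mpr h, Complex.normSq_nonneg u2]
        · nlinarith [Complex.normSq_pos.mpr h, Complex.normSq_nonneg u1]
      set s : ℝ := Real.sqrt (Complex.normSq u1 + Complex.normSq u2) with hs
      have hs0 : (s : ℂ) ≠ 0 := by exact_mod_cast (Real.sqrt_pos.mpr hpos).ne'
      have hss : (s : ℂ) * s = (Complex.normSq u1 : ℂ) + (Complex.normSq u2 : ℂ) := by
        exact_mod_cast congrArg (fun x : ℝ => (x : ℂ)) (Real.mul_self_sqrt hpos.le)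
      have c2 : conj' (-conj' u2 / (s : ℂ)) = -u2 / s := by
        simp [map_div₀, Complex.conj_ofReal]
      have c3 : conj' (conj' u1 / (s : ℂ)) = u1 / s := by
        simp [map_div₀, Complex.conj_ofReal]
      refine ⟨-conj' u2 / s, conj' u1 / s, ?_, ?_, by simp [hv.1, hv.2]⟩
      · rw [c2, c3, div_mul_div_comm, div_mul_div_comm, ← add_div,
          div_eq_one_iff_eq (mul_ne_zero hs0 hs0), hss]
        linear_combination Complex.mul_conj u1 + Complex.mul_conj u2
      · rw [c2, c3]
        field_simp
        ring
  · have hpos : 0 < Complex.normSq v1 + Complex.normSq v2 := by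
      rcases (not_and_or.mp hv) with h | h
      · nlinarith [Complex.normSq_pos.mpr h, Complex.normSq_nonneg v2]
      · nlinarith [Complex.normSq_pos.mpr h, Complex.normSq_nonneg v1]
    set s : ℝ := Real.sqrt (Complex.normSq v1 + Complex.normSq v2) with hs
    have hs0 : (s : ℂ) ≠ 0 := by exact_mod_cast (Real.sqrt_pos.mpr hpos).ne'
    have hss : (s : ℂ) * s = (Complex.normSq v1 : ℂ) + (Complex.normSq v2 : ℂ) := by
      exact_mod_cast congrArg (fun x : ℝ => (x : ℂ)) (Real.mul_self_sqrt hpos.le)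
    have c2 : conj' (v1 / (s : ℂ)) = conj' v1 / s := by
      simp [map_div₀, Complex.conj_ofReal]
    have c3 : conj' (v2 / (s : ℂ)) = conj' v2 / s := by
      simp [map_div₀, Complex.conj_ofReal]
    refine ⟨v1 / s, v2 / s, ?_, ?_, by field_simp; ring⟩
    · rw [c2, c3, div_mul_div_comm, div_mul_div_comm, ← add_div,
        div_eq_one_iff_eq (mul_ne_zero hs0 hs0), hss]
      linear_combination Complex.mul_conj v1 + Complex.mul_conj v2
    · rw [c2, c3]
      rw [div_mul_eq_mul_div, div_mul_eq_mul_div, ← add_div, _root_.div_eq_zero_iff]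
      left
      linear_combination horth


/-- The ordered product `A_n W̃(z) A_{n−1} W̃(z) ⋯ W̃(z) A_0` of a QSP protocol,
with signal operator `W̃(z) = diag(z, 1)`. -/
noncomputable def qspProd (A : ℕ → Matrix (Fin 2) (Fin 2) ℂ) : ℕ → ℂ → Matrix (Fin 2) (Fin 2) ℂ
  | 0, _ => A 0
  | k + 1, z => A (k + 1) * !![z, 0; 0, 1] * qspProd A k z

lemma qspProd_congr (A B : ℕ → Matrix (Fin 2) (Fin 2) ℂ) (k : ℕ) (z : ℂ)
    (h : ∀ i ≤ k, A i = B i) : qspProd A k z = qspProd B k z := by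
  induction k with
  | zero => exact h 0 le_rfl
  | succ m ih =>
    show A (m + 1) * !![z, 0; 0, 1] * qspProd A m z = B (m + 1) * !![z, 0; 0, 1] * qspProd B m z
    rw [h (m + 1) le_rfl, ih (fun i hi => h i (hi.trans (Nat.le_succ m)))]

lemma col_mulVec (M : Matrix (Fin 2) (Fin 2) ℂ) (a b : ℂ) :
    M.mulVec ![a, b] = ![M 0 0 * a + M 0 1 * b, M 1 0 * a + M 1 1 * b] := by
  funext i
  fin_cases i <;> simp [Matrix.mulVec, dotProduct, Fin.sum_univ_two]


/-- Generalized QSP decomposition: any pair of polynomials `P, Q` of degree at most `n` with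
`|P(z)|² + |Q(z)|² = 1` on the unit circle arises from a QSP protocol
`A_n W̃(z) A_{n−1} ⋯ W̃(z) A_0` with unitary `A_k ∈ U(2)`, applied to `(1,0)ᵀ`. -/
theorem gqsp_decomposition
    (n : ℕ) (P Q : Polynomial ℂ)
    (hP : P.natDegree ≤ n) (hQ : Q.natDegree ≤ n)
    (hnorm : ∀ z : ℂ, ‖z‖ = 1 →
      ‖P.eval z‖ ^ 2 + ‖Q.eval z‖ ^ 2 = 1) :
    ∃ A : ℕ → Matrix (Fin 2) (Fin 2) ℂ,
      (∀ k, A k ∈ Matrix.unitaryGroup (Fin 2) ℂ) ∧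
      ∀ z : ℂ, ‖z‖ = 1 →
        (qspProd A n z).mulVec ![1, 0] = ![P.eval z, Q.eval z] := by
  induction n generalizing P Q with
  | zero =>
    have hPC : P = C (P.coeff 0) := Polynomial.eq_C_of_natDegree_le_zero hP
    have hQC : Q = C (Q.coeff 0) := Polynomial.eq_C_of_natDegree_le_zero hQ
    set p0 := P.coeff 0
    set q0 := Q.coeff 0
    have h1 := hnorm 1 (by simp)
    rw [hPC, hQC] at h1
    simp only [Polynomial.eval_C] at h1
    have he : p0 * conj' p0 + q0 * conj' q0 = 1 := by
      rw [Complex.mul_conj, Complex.mul_conj]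
      rw [← Complex.sq_norm, ← Complex.sq_norm]
      exact_mod_cast h1
    refine ⟨fun _ => !![p0, -conj' q0; q0, conj' p0], fun k => unitary_mat p0 q0 he, ?_⟩
    intro z _
    show Matrix.mulVec !![p0, -conj' q0; q0, conj' p0] ![1, 0] = _
    rw [col_mulVec, hPC, hQC]
    simp
  | succ n ih =>
    have horth := orth_lemma n P Q hP hQ hnorm
    obtain ⟨e1, e2, he, hu, hv⟩ :=
      exists_e (P.coeff 0) (Q.coeff 0) (P.coeff (n + 1)) (Q.coeff (n + 1)) horth
    set C1 : Polynomial ℂ := C (conj' e1) * P + C (conj' e2) * Q with hC1def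
    set P' : Polynomial ℂ := C1.divX with hP'def
    set Q' : Polynomial ℂ := C (-e2) * P + C e1 * Q with hQ'def
    have hC10 : C1.coeff 0 = 0 := by
      simp only [hC1def, Polynomial.coeff_add, Polynomial.coeff_C_mul]
      exact hu
    have hC1X : X * P' = C1 := by
      have := Polynomial.X_mul_divX_add C1
      rwa [hC10, map_zero, add_zero] at this
    have hC1deg : C1.natDegree ≤ n + 1 :=
      (Polynomial.natDegree_add_le _ _).trans
        (max_le ((Polynomial.natDegree_C_mul_le _ _).trans hP)
          ((Polynomial.natDegree_C_mul_le _ _).trans hQ))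
    have hP' : P'.natDegree ≤ n := by
      rw [hP'def, Polynomial.natDegree_divX_eq_natDegree_tsub_one]
      omega
    have hQ'deg : Q'.natDegree ≤ n := by
      rw [Polynomial.natDegree_le_iff_coeff_eq_zero]
      intro m hm
      simp only [hQ'def, Polynomial.coeff_add, Polynomial.coeff_C_mul]
      rcases eq_or_lt_of_le (Nat.succ_le_of_lt hm) with hm1 | hm1
      · rw [← hm1]
        linear_combination hv
      · rw [Polynomial.coeff_eq_zero_of_natDegree_lt (lt_of_le_of_lt hP hm1),
          Polynomial.coeff_eq_zero_of_natDegree_lt (lt_of_le_of_lt hQ hm1)]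
        ring
    have hevC1 : ∀ z : ℂ, z * P'.eval z = conj' e1 * P.eval z + conj' e2 * Q.eval z := by
      intro z
      have := congrArg (Polynomial.eval z) hC1X
      simpa only [hC1def, Polynomial.eval_mul, Polynomial.eval_X, Polynomial.eval_add,
        Polynomial.eval_C] using this
    have hevQ' : ∀ z : ℂ, Q'.eval z = -e2 * P.eval z + e1 * Q.eval z := by
      intro z
      simp [hQ'def]
    have hnorm' : ∀ z : ℂ, ‖z‖ = 1 →
        ‖P'.eval z‖ ^ 2 + ‖Q'.eval z‖ ^ 2 = 1 := by
      intro z hz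
      have habsP' : ‖P'.eval z‖ =
          ‖conj' e1 * P.eval z + conj' e2 * Q.eval z‖ := by
        rw [← hevC1 z, norm_mul, hz, one_mul]
      rw [habsP']
      have := normsq_combo e1 e2 (P.eval z) (Q.eval z) he
      rw [hevQ' z, ← hnorm z hz]
      exact this
    obtain ⟨A', hA'u, hA'⟩ := ih P' Q' hP' hQ'deg hnorm'
    set Amat : Matrix (Fin 2) (Fin 2) ℂ := !![e1, -conj' e2; e2, conj' e1] with hAmat
    refine ⟨Function.update A' (n + 1) Amat, ?_, ?_⟩
    · intro k
      rcases eq_or_ne k (n + 1) with rfl | hk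
      · rw [Function.update_self]
        exact unitary_mat e1 e2 he
      · rw [Function.update_of_ne hk]
        exact hA'u k
    · intro z hz
      have hcongr : qspProd (Function.update A' (n + 1) Amat) n z = qspProd A' n z := by
        apply qspProd_congr
        intro i hi
        exact Function.update_of_ne (by omega) _ _
      show (Function.update A' (n + 1) Amat (n + 1) * !![z, 0; 0, 1] *
        qspProd (Function.update A' (n + 1) Amat) n z).mulVec ![1, 0] = ![P.eval z, Q.eval z]
      rw [Function.update_self, hcongr, ← Matrix.mulVec_mulVec, ← Matrix.mulVec_mulVec,
        hA' z hz]
      have hmid : Matrix.mulVec !![z, 0; 0, 1] ![P'.eval z, Q'.eval z]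
          = ![z * P'.eval z, Q'.eval z] := by
        rw [col_mulVec]
        simp
      rw [hmid, col_mulVec]
      have h1 := hevC1 z
      have h2 := hevQ' z
      funext i
      fin_cases i
      · show e1 * (z * P'.eval z) + -conj' e2 * Q'.eval z = P.eval z
        linear_combination e1 * h1 - conj' e2 * h2 + P.eval z * he
      · show e2 * (z * P'.eval z) + conj' e1 * Q'.eval z = Q.eval z
        linear_combination e2 * h1 + conj' e1 * h2 + Q.eval z * he
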